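/- arXiv:2107.10316 — 3 statements merged into one kernel-verified Lean document; each statement's English description precedes it below -/
import Mathlib

section
/- Let H be an orthogonal projection and A a bounded operator on a Hilbert space. Let E(A) = (1/2π)∫₀^{2π} e^{iθH} A e^{-iθH} dθ. Then ‖A − E(A)‖ ≤ π‖[H,A]‖. -/
/-!
Since `H` is idempotent, `exp (z • H) = (1 - H) + e^z • H`, so conjugating `A` by `e^{iθH}` gives
`HAH + (1-H)A(1-H) + e^{iθ} • HA(1-H) + e^{-iθ} • (1-H)AH`. Averaging over `θ` kills the two
off-diagonal Fourier modes, so `E(A)` is the pinching `HAH + (1-H)A(1-H)`, and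
`A - E(A) = HA(1-H) + (1-H)AH = [H, [H, A]]`, whose norm is at most `2‖[H, A]‖ ≤ π‖[H, A]‖`.
-/

open NormedSpace

variable {E : Type*} [NormedAddCommGroup E] [InnerProductSpace ℂ E] [CompleteSpace E]

/-- The average of `A` over conjugation by `e^{iθH}`, `θ` uniform on `[0, 2π]`. -/
noncomputable def conjAvg (H A : E →L[ℂ] E) : E →L[ℂ] E :=
  (1 / (2 * Real.pi)) • ∫ θ in (0:ℝ)..(2 * Real.pi),
    exp (((θ : ℂ) * Complex.I) • H) * A * star (exp (((θ : ℂ) * Complex.I) • H))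

/-- Iterated conjugation average `E_S` over the projections `H r`, `r ∈ S`. -/
noncomputable def conjAvgOver {n : ℕ} (H : Fin n → (E →L[ℂ] E)) (S : Finset (Fin n))
    (A : E →L[ℂ] E) : E →L[ℂ] E :=
  (S.sort (· ≤ ·)).foldr (fun r B => conjAvg (H r) B) A

open Nat in
theorem IsIdempotentElem.exp_smul {𝔸 : Type*} [NormedRing 𝔸] [NormedAlgebra ℂ 𝔸]
    [CompleteSpace 𝔸] {p : 𝔸} (hp : IsIdempotentElem p) (z : ℂ) :
    exp (z • p) = (1 - p) + Complex.exp z • p := by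
  have hterms : Function.update (fun n : ℕ => ((n !⁻¹ : ℂ) • z ^ n) • p) 0 1 =
      fun n => (n !⁻¹ : ℂ) • (z • p) ^ n := by
    ext (_ | n)
    · simp
    · simp [smul_pow, hp.pow_succ_eq, smul_smul]
  have hsum := ((exp_series_hasSum_exp' (𝕂 := ℂ) z).smul_const p).update 0 1
  rw [hterms, ← Complex.exp_eq_exp_ℂ] at hsum
  rw [(exp_series_hasSum_exp' (z • p)).unique hsum]
  simp

def pinching {R : Type*} [Ring R] (p a : R) : R :=
  p * a * p + (1 - p) * a * (1 - p)

theorem IsIdempotentElem.sub_pinching {R : Type*} [Ring R] {p : R} (hp : IsIdempotentElem p)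
    (a : R) : a - pinching p a = p * (p * a - a * p) - (p * a - a * p) * p := by
  have hpa : p * (p * a) = p * a := by rw [← mul_assoc, hp.eq]
  have hap : a * p * p = a * p := by rw [mul_assoc, hp.eq]
  simp only [pinching, mul_sub, sub_mul, one_mul, mul_one, hpa, hap, mul_assoc]
  abel

theorem one_sub_add_smul_mul_mul_one_sub_add_smul {R : Type*} [Ring R] [Algebra ℂ R] (p a : R)
    {u v : ℂ} (huv : u * v = 1) :
    ((1 - p) + u • p) * a * ((1 - p) + v • p) =
      pinching p a + u • (p * a * (1 - p)) + v • ((1 - p) * a * p) := by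
  simp only [pinching, add_mul, mul_add, smul_mul_assoc, mul_smul_comm, smul_add, smul_smul,
    mul_comm v u, huv, one_smul]
  abel

theorem IsStarProjection.exp_smul_mul_mul_star {𝔸 : Type*} [NormedRing 𝔸] [NormedAlgebra ℂ 𝔸]
    [CompleteSpace 𝔸] [StarRing 𝔸] [StarModule ℂ 𝔸] {p : 𝔸} (hp : IsStarProjection p)
    (a : 𝔸) (θ : ℝ) :
    exp (((θ : ℂ) * Complex.I) • p) * a * star (exp (((θ : ℂ) * Complex.I) • p)) =
      pinching p a + Complex.exp (θ * Complex.I) • (p * a * (1 - p)) +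
        Complex.exp (-(θ * Complex.I)) • ((1 - p) * a * p) := by
  have hconj : star (Complex.exp (θ * Complex.I)) = Complex.exp (-(θ * Complex.I)) := by
    rw [Complex.star_def, ← Complex.exp_conj]
    simp
  rw [hp.isIdempotentElem.exp_smul, star_add, star_sub, star_one, star_smul, hconj,
    hp.isSelfAdjoint.star_eq, one_sub_add_smul_mul_mul_one_sub_add_smul p a]
  rw [← Complex.exp_add, add_neg_cancel, Complex.exp_zero]

theorem IsStarProjection.norm_commutator_le {R : Type*} [NormedRing R] [StarRing R] [CStarRing R]
    {p : R} (hp : IsStarProjection p) (c : R) : ‖p * c - c * p‖ ≤ 2 * ‖c‖ :=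
  calc ‖p * c - c * p‖ ≤ ‖p‖ * ‖c‖ + ‖c‖ * ‖p‖ :=
        (norm_sub_le _ _).trans (add_le_add (norm_mul_le _ _) (norm_mul_le _ _))
    _ ≤ 1 * ‖c‖ + ‖c‖ * 1 := by gcongr <;> exact IsStarProjection.norm_le p hp
    _ = 2 * ‖c‖ := by ring

theorem integral_exp_int_mul_mul_I {n : ℤ} (hn : n ≠ 0) :
    ∫ θ in (0 : ℝ)..(2 * Real.pi), Complex.exp (n * (θ * Complex.I)) = 0 := by
  have hc : (n : ℂ) * Complex.I ≠ 0 := by simp [hn]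
  simp_rw [← mul_assoc, mul_right_comm _ _ Complex.I]
  rw [integral_exp_mul_complex hc]
  push_cast
  rw [show (n : ℂ) * Complex.I * (2 * Real.pi) = n * (2 * Real.pi * Complex.I) by ring,
    Complex.exp_int_mul_two_pi_mul_I, mul_zero, Complex.exp_zero, sub_self, zero_div]

theorem integral_exp_int_mul_mul_I_smul {F : Type*} [NormedAddCommGroup F] [NormedSpace ℂ F]
    [CompleteSpace F] {n : ℤ} (hn : n ≠ 0) (x : F) :
    ∫ θ in (0 : ℝ)..(2 * Real.pi), Complex.exp (n * (θ * Complex.I)) • x = 0 := by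
  rw [intervalIntegral.integral_smul_const, integral_exp_int_mul_mul_I hn, zero_smul]

theorem conjAvg_eq_pinching {H : E →L[ℂ] E} (hH : IsStarProjection H) (A : E →L[ℂ] E) :
    conjAvg H A = pinching H A := by
  have hmode (n : ℤ) (X : E →L[ℂ] E) : IntervalIntegrable
      (fun θ : ℝ => Complex.exp (n * (θ * Complex.I)) • X) MeasureTheory.volume 0 (2 * Real.pi) :=
    (by fun_prop : Continuous _).intervalIntegrable _ _
  have h1 := integral_exp_int_mul_mul_I_smul one_ne_zero (H * A * (1 - H))
  have h2 := integral_exp_int_mul_mul_I_smul (neg_ne_zero.mpr one_ne_zero) ((1 - H) * A * H)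
  have i1 := hmode 1 (H * A * (1 - H))
  have i2 := hmode (-1) ((1 - H) * A * H)
  push_cast at h1 h2 i1 i2
  simp only [one_mul, neg_one_mul] at h1 h2 i1 i2
  simp_rw [conjAvg, hH.exp_smul_mul_mul_star]
  rw [intervalIntegral.integral_add (intervalIntegrable_const.add i1) i2,
    intervalIntegral.integral_add intervalIntegrable_const i1, h1, h2,
    intervalIntegral.integral_const, add_zero, add_zero, smul_smul, sub_zero,
    one_div_mul_cancel Real.two_pi_pos.ne', one_smul]

/-- For an orthogonal projection `H` and bounded operator `A`, with
`E(A) = (1/2π)∫₀^{2π} e^{iθH} A e^{-iθH} dθ`, one has `‖A − E(A)‖ ≤ π‖[H,A]‖`. -/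
theorem norm_sub_conjAvg_le
    (H A : E →L[ℂ] E) (hH : IsSelfAdjoint H) (hidem : H * H = H) :
    ‖A - conjAvg H A‖ ≤ Real.pi * ‖H * A - A * H‖ := by
  have hproj : IsStarProjection H := ⟨hidem, hH⟩
  rw [conjAvg_eq_pinching hproj, hproj.isIdempotentElem.sub_pinching]
  calc _ ≤ 2 * ‖H * A - A * H‖ := hproj.norm_commutator_le _
    _ ≤ Real.pi * ‖H * A - A * H‖ := by gcongr; exact Real.two_le_pi
end

section
/- Let A be a self-adjoint operator with spectrum in [q_min, q_max] on a finite-dimensional Hilbert space, U a unitary, Ω a unit vector, and suppose there is a real number c such that ⟨Ω, (U*)^k (U*AU − A) U^k Ω⟩ = c for all natural numbers k. Then c = 0. -/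
open scoped InnerProductSpace

/-! Since `(U*)ᵏ (U*AU − A) Uᵏ = (U*)ᵏ⁺¹ A Uᵏ⁺¹ − (U*)ᵏ A Uᵏ`, the expectations
`⟨Ω, (U*)ⁿ A Uⁿ Ω⟩` form an arithmetic progression with difference `c`. Conjugating by the
unitary `Uⁿ` preserves the operator norm, so they are bounded by `‖A‖ ‖Ω‖²`; a bounded
arithmetic progression is constant. -/

theorem pow_succ_mul_mul_pow_succ_sub {R : Type*} [Ring R] (v a u : R) (k : ℕ) :
    v ^ (k + 1) * a * u ^ (k + 1) - v ^ k * a * u ^ k = v ^ k * (v * a * u - a) * u ^ k := by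
  rw [pow_succ, pow_succ']
  noncomm_ring

theorem eq_zero_of_forall_sub_eq_of_norm_le {F : Type*} [NormedAddCommGroup F]
    [NormedSpace ℝ F] {f : ℕ → F} {d : F} {M : ℝ} (hstep : ∀ k, f (k + 1) - f k = d)
    (hbound : ∀ n, ‖f n‖ ≤ M) : d = 0 := by
  have hprog (n : ℕ) : f n - f 0 = n • d := by
    simp [← Finset.sum_range_sub f n, hstep]
  have hlin (n : ℕ) : n * ‖d‖ ≤ 2 * M := by
    calc n * ‖d‖ = ‖f n - f 0‖ := by rw [hprog, RCLike.norm_nsmul ℝ, nsmul_eq_mul]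
      _ ≤ ‖f n‖ + ‖f 0‖ := norm_sub_le _ _
      _ ≤ 2 * M := by linarith [hbound n, hbound 0]
  by_contra hd
  have hpos : 0 < ‖d‖ := norm_pos_iff.mpr hd
  obtain ⟨n, hn⟩ := exists_nat_gt (2 * M / ‖d‖)
  exact (hlin n).not_gt ((div_lt_iff₀ hpos).mp hn)

theorem norm_inner_star_mul_mul_apply_le {𝕜 E : Type*} [RCLike 𝕜] [NormedAddCommGroup E]
    [InnerProductSpace 𝕜 E] [CompleteSpace E] (A : E →L[𝕜] E) {W : E →L[𝕜] E}
    (hW : W ∈ unitary (E →L[𝕜] E)) (x : E) :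
    ‖⟪x, (star W * A * W) x⟫_𝕜‖ ≤ ‖A‖ * ‖x‖ ^ 2 := by
  have hconj : ‖star W * A * W‖ = ‖A‖ := by
    rw [CStarRing.norm_mul_mem_unitary _ hW,
      CStarRing.norm_mem_unitary_mul _ (Unitary.star_mem hW)]
  calc ‖⟪x, (star W * A * W) x⟫_𝕜‖ ≤ ‖x‖ * ‖(star W * A * W) x‖ := norm_inner_le_norm _ _
    _ ≤ ‖x‖ * (‖star W * A * W‖ * ‖x‖) := by gcongr; exact (star W * A * W).le_opNorm x
    _ = ‖A‖ * ‖x‖ ^ 2 := by rw [hconj]; ring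

theorem pumped_charge_vanishes_general
    {E : Type*} [NormedAddCommGroup E] [InnerProductSpace ℂ E] [FiniteDimensional ℂ E]
    (A U : E →L[ℂ] E)
    (hU : U ∈ unitary (E →L[ℂ] E))
    (Ω : E) (c : ℝ)
    (hc : ∀ k : ℕ,
      ⟪Ω, ((star U) ^ k * (star U * A * U - A) * U ^ k) Ω⟫_ℂ = (c : ℂ)) :
    c = 0 := by
  set f : ℕ → ℂ := fun n => ⟪Ω, ((star U) ^ n * A * U ^ n) Ω⟫_ℂ
  have hstep (k : ℕ) : f (k + 1) - f k = c := by
    rw [← hc k, ← pow_succ_mul_mul_pow_succ_sub, sub_apply, inner_sub_right]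
  have hbound (n : ℕ) : ‖f n‖ ≤ ‖A‖ * ‖Ω‖ ^ 2 := by
    simpa only [f, star_pow] using norm_inner_star_mul_mul_apply_le A (pow_mem hU n) Ω
  exact_mod_cast eq_zero_of_forall_sub_eq_of_norm_le hstep hbound

/-- Let `A` be self-adjoint with spectrum in `[qmin, qmax]` on a
finite-dimensional complex Hilbert space, `U` unitary, `Ω` a unit vector. If there is a real
`c` with `⟨Ω, (U*)^k (U*AU − A) U^k Ω⟩ = c` for all `k`, then `c = 0`. -/
theorem pumped_charge_vanishes
    {E : Type*} [NormedAddCommGroup E] [InnerProductSpace ℂ E] [FiniteDimensional ℂ E]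
    (A U : E →L[ℂ] E) (qmin qmax : ℝ)
    (hA : IsSelfAdjoint A)
    (hspec : ∀ z ∈ spectrum ℂ A, z.re ∈ Set.Icc qmin qmax ∧ z.im = 0)
    (hU : U ∈ unitary (E →L[ℂ] E))
    (Ω : E) (hΩ : ‖Ω‖ = 1) (c : ℝ)
    (hc : ∀ k : ℕ,
      ⟪Ω, ((star U) ^ k * (star U * A * U - A) * U ^ k) Ω⟫_ℂ = (c : ℂ)) :
    c = 0 :=
  pumped_charge_vanishes_general A U hU Ω c hc
end

section
/- Let P be an orthogonal projection with Tr(P) > 0 on a finite-dimensional Hilbert space, and X, Q bounded operators. Then |Tr(P[X,Q])|/Tr(P) ≤ 2‖Q‖·‖[X,P]‖, where ‖·‖ is the operator norm. -/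
/-! Cyclicity of the trace and `P = P²` turn `Tr(P[X,Q])` into `-Tr(P[X,P]Q) - Tr(PQ[X,P])`.
For a projection, `|Tr(PM)| = |∑ᵢ ⟪Pbᵢ, MPbᵢ⟫| ≤ ‖M‖ ∑ᵢ ‖Pbᵢ‖² = ‖M‖ Tr P` in any orthonormal
basis `b`, which bounds each of the two terms by `‖Q‖ ‖[X,P]‖ Tr P`. -/

open scoped InnerProductSpace
open LinearMap (trace)

theorem LinearMap.trace_mul_commutator_of_isIdempotentElem {R M : Type*} [CommRing R]
    [AddCommGroup M] [Module R M] {p : Module.End R M} (hp : IsIdempotentElem p)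
    (x q : Module.End R M) :
    trace R M (p * (x * q - q * x)) =
      -(trace R M (p * ((x * p - p * x) * q)) + trace R M (p * (q * (x * p - p * x)))) := by
  have hpqxp : trace R M (p * q * x * p) = trace R M (p * q * x) := by
    rw [trace_mul_comm, ← mul_assoc, ← mul_assoc, hp.eq]
  have hpxpq : trace R M (p * x * p * q) = trace R M (p * q * p * x) := by
    rw [mul_assoc (p * x), trace_mul_comm, ← mul_assoc]
  simp only [mul_sub, sub_mul, map_sub, ← mul_assoc, hp.eq]
  linear_combination hpqxp + hpxpq

namespace IsStarProjection

variable {𝕜 E ι : Type*} [RCLike 𝕜] [NormedAddCommGroup E] [InnerProductSpace 𝕜 E]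
  [CompleteSpace E] [Fintype ι] {P : E →L[𝕜] E}

theorem trace_mul_eq_sum_inner (hP : IsStarProjection P) (M : E →L[𝕜] E)
    (b : OrthonormalBasis ι 𝕜 E) :
    trace 𝕜 E ↑(P * M) = ∑ i, ⟪P (b i), M (P (b i))⟫_𝕜 := by
  have hPPM : trace 𝕜 E ↑(P * M) = trace 𝕜 E ↑(P * M * P) :=
    calc trace 𝕜 E ↑(P * M) = trace 𝕜 E ↑(P * P * M) := by rw [hP.isIdempotentElem.eq]
      _ = trace 𝕜 E ↑(P * M * P) := by
        rw [mul_assoc, ContinuousLinearMap.toLinearMap_mul, LinearMap.trace_mul_comm,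
          ← ContinuousLinearMap.toLinearMap_mul]
  rw [hPPM, LinearMap.trace_eq_sum_inner _ b]
  refine Finset.sum_congr rfl fun i _ => ?_
  exact hP.isSelfAdjoint.isSymmetric _ _ |>.symm

theorem re_trace_eq_sum_norm_sq (hP : IsStarProjection P) (b : OrthonormalBasis ι 𝕜 E) :
    RCLike.re (trace 𝕜 E ↑P) = ∑ i, ‖P (b i)‖ ^ 2 := by
  simpa [inner_self_eq_norm_sq] using congrArg RCLike.re (hP.trace_mul_eq_sum_inner 1 b)

variable [FiniteDimensional 𝕜 E]

theorem re_trace_nonneg (hP : IsStarProjection P) : 0 ≤ RCLike.re (trace 𝕜 E ↑P) :=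
  hP.re_trace_eq_sum_norm_sq (stdOrthonormalBasis 𝕜 E) ▸ by positivity

theorem norm_trace_mul_le (hP : IsStarProjection P) (M : E →L[𝕜] E) :
    ‖trace 𝕜 E ↑(P * M)‖ ≤ ‖M‖ * RCLike.re (trace 𝕜 E ↑P) := by
  let b := stdOrthonormalBasis 𝕜 E
  rw [hP.trace_mul_eq_sum_inner M b, hP.re_trace_eq_sum_norm_sq b, Finset.mul_sum]
  refine (norm_sum_le _ _).trans (Finset.sum_le_sum fun i _ => ?_)
  calc ‖⟪P (b i), M (P (b i))⟫_𝕜‖ ≤ ‖P (b i)‖ * ‖M (P (b i))‖ := norm_inner_le_norm _ _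
    _ ≤ ‖P (b i)‖ * (‖M‖ * ‖P (b i)‖) := by gcongr; exact M.le_opNorm _
    _ = ‖M‖ * ‖P (b i)‖ ^ 2 := by ring

end IsStarProjection

theorem trace_commutator_div_trace_le_general
    {E : Type*} [NormedAddCommGroup E] [InnerProductSpace ℂ E] [FiniteDimensional ℂ E]
    (P X Q : E →L[ℂ] E) (hP : IsSelfAdjoint P) (hidem : P * P = P) :
    ‖LinearMap.trace ℂ E ↑(P * (X * Q - Q * X))‖ / (LinearMap.trace ℂ E ↑P).re ≤
      2 * ‖Q‖ * ‖X * P - P * X‖ := by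
  have hproj : IsStarProjection P := ⟨hidem, hP⟩
  set C := X * P - P * X
  have hsplit : trace ℂ E ↑(P * (X * Q - Q * X)) =
      -(trace ℂ E ↑(P * (C * Q)) + trace ℂ E ↑(P * (Q * C))) := by
    simpa [C] using LinearMap.trace_mul_commutator_of_isIdempotentElem
      (hproj.isIdempotentElem.map ContinuousLinearMap.toLinearMapRingHom) X Q
  have hnonneg : 0 ≤ (trace ℂ E ↑P).re := hproj.re_trace_nonneg
  refine div_le_of_le_mul₀ hnonneg (by positivity) ?_
  calc ‖trace ℂ E ↑(P * (X * Q - Q * X))‖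
      ≤ ‖C * Q‖ * (trace ℂ E ↑P).re + ‖Q * C‖ * (trace ℂ E ↑P).re := by
        rw [hsplit, norm_neg]
        exact norm_add_le_of_le (hproj.norm_trace_mul_le _) (hproj.norm_trace_mul_le _)
    _ ≤ 2 * ‖Q‖ * ‖C‖ * (trace ℂ E ↑P).re := by
        nlinarith [norm_mul_le C Q, norm_mul_le Q C]

/-- On a finite-dimensional complex Hilbert space, for an orthogonal
projection `P` with `Tr(P) > 0` and bounded operators `X, Q`:
`|Tr(P[X,Q])| / Tr(P) ≤ 2‖Q‖·‖[X,P]‖` in operator norm. -/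
theorem trace_commutator_div_trace_le
    {E : Type*} [NormedAddCommGroup E] [InnerProductSpace ℂ E] [FiniteDimensional ℂ E]
    (P X Q : E →L[ℂ] E) (hP : IsSelfAdjoint P) (hidem : P * P = P)
    (htr : 0 < (LinearMap.trace ℂ E ↑P).re) :
    ‖LinearMap.trace ℂ E ↑(P * (X * Q - Q * X))‖ / (LinearMap.trace ℂ E ↑P).re ≤
      2 * ‖Q‖ * ‖X * P - P * X‖ :=
  trace_commutator_div_trace_le_general P X Q hP hidem
end
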